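/- arXiv:1808.10621 — 5 statements merged into one kernel-verified Lean document; each statement's English description precedes it below -/
import Mathlib

section
/- Let Ω be a bounded, open, connected subset of ℝ^d and let ν : ℝ^d → ℝ^d be a map such that for every x in the frontier ∂Ω one has ν(x) ≠ 0 and ⟨x − p, ν(x)⟩ ≥ 0 for every p ∈ Ω. Then Ω is convex. -/
/-!
If `Ω` were not convex, some segment `[p, q]` with endpoints in `Ω` would leave `Ω`, so it would
cross `∂Ω` at a point `x` strictly between `p` and `q`. The affine function `y ↦ ⟪x - y, ν x⟫` is
nonnegative at `p` and `q` and vanishes at `x`, hence vanishes at `p`. But it is nonnegative on the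
open set `Ω` and has nonzero gradient, so it cannot attain its minimum `0` at the point `p ∈ Ω`.
-/

open Filter Topology
open scoped RealInnerProductSpace

theorem IsPreconnected.inter_frontier_nonempty {X : Type*} [TopologicalSpace X] {s t : Set X}
    (hs : IsPreconnected s) (hst : (s ∩ t).Nonempty) (hst' : ¬s ⊆ t) :
    (s ∩ frontier t).Nonempty := by
  by_contra hfr
  have hcover : s ⊆ interior t ∪ (closure t)ᶜ := fun x hx => by
    by_cases hxi : x ∈ interior t
    · exact .inl hxi
    · exact .inr fun hxc => hfr ⟨x, hx, hxc, hxi⟩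
  obtain ⟨x, hxs, hxt⟩ := hst
  have hint : (s ∩ interior t).Nonempty :=
    ⟨x, hxs, (hcover hxs).resolve_right fun hxc => hxc (subset_closure hxt)⟩
  have hdisj : Disjoint (interior t) (closure t)ᶜ :=
    Set.disjoint_compl_right_iff_subset.mpr (interior_subset.trans subset_closure)
  exact hst' ((hs.subset_left_of_subset_union isOpen_interior isClosed_closure.isOpen_compl hdisj
    hcover hint).trans interior_subset)

theorem IsOpen.exists_mem_openSegment_frontier {E : Type*} [AddCommGroup E] [Module ℝ E]
    [TopologicalSpace E] [ContinuousAdd E] [ContinuousSMul ℝ E] {U : Set E} (hU : IsOpen U)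
    {p q z : E} (hp : p ∈ U) (hq : q ∈ U) (hz : z ∈ segment ℝ p q) (hzU : z ∉ U) :
    ∃ x ∈ openSegment ℝ p q, x ∈ frontier U := by
  obtain ⟨x, hxseg, hxfr⟩ := (convex_segment p q).isPreconnected.inter_frontier_nonempty
    ⟨p, left_mem_segment ℝ p q, hp⟩ fun hsub => hzU (hsub hz)
  have hxU : x ∉ U := (hU.frontier_eq ▸ hxfr).2
  exact ⟨x, mem_openSegment_of_ne_left_right (ne_of_mem_of_not_mem hp hxU)
    (ne_of_mem_of_not_mem hq hxU) hxseg, hxfr⟩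

section InnerProductSpace

variable {E : Type*} [NormedAddCommGroup E] [InnerProductSpace ℝ E]

theorem inner_sub_eq_zero_of_mem_openSegment {p q x w : E} (hx : x ∈ openSegment ℝ p q)
    (hp : 0 ≤ ⟪x - p, w⟫) (hq : 0 ≤ ⟪x - q, w⟫) : ⟪x - p, w⟫ = 0 := by
  obtain ⟨a, b, ha, hb, hab, rfl⟩ := hx
  have hsum : a • (a • p + b • q - p) + b • (a • p + b • q - q) = 0 := by
    obtain rfl : b = 1 - a := by linarith
    module
  have hinner : a * ⟪a • p + b • q - p, w⟫ + b * ⟪a • p + b • q - q, w⟫ = 0 := by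
    rw [← real_inner_smul_left, ← real_inner_smul_left, ← inner_add_left, hsum, inner_zero_left]
  nlinarith [mul_nonneg ha.le hp, mul_nonneg hb.le hq]

theorem IsOpen.inner_sub_pos {U : Set E} (hU : IsOpen U) {x w : E} (hw : w ≠ 0)
    (hxU : ∀ p ∈ U, 0 ≤ ⟪x - p, w⟫) {p : E} (hp : p ∈ U) : 0 < ⟪x - p, w⟫ := by
  have hshift : Tendsto (fun c : ℝ => p + c • w) (𝓝[>] 0) (𝓝 p) :=
    tendsto_nhdsWithin_of_tendsto_nhds
      ((by fun_prop : Continuous fun c : ℝ => p + c • w).tendsto' 0 p (by simp))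
  obtain ⟨c, hcU, hc⟩ :=
    ((hshift.eventually_mem (hU.mem_nhds hp)).and self_mem_nhdsWithin).exists
  have hcw : 0 < c * ‖w‖ ^ 2 := mul_pos hc (by positivity)
  have hshifted := hxU _ hcU
  rw [sub_add_eq_sub_sub, inner_sub_left, real_inner_smul_left, real_inner_self_eq_norm_sq]
    at hshifted
  linarith

end InnerProductSpace

theorem frontier_inner_nonneg_convex_general
    (d : ℕ) (Ω : Set (EuclideanSpace ℝ (Fin d)))
    (hopen : IsOpen Ω)
    (ν : EuclideanSpace ℝ (Fin d) → EuclideanSpace ℝ (Fin d))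
    (hν : ∀ x ∈ frontier Ω, ν x ≠ 0)
    (h : ∀ x ∈ frontier Ω, ∀ p ∈ Ω, 0 ≤ ⟪x - p, ν x⟫) :
    Convex ℝ Ω := by
  rw [convex_iff_segment_subset]
  intro p hp q hq z hz
  by_contra hzΩ
  obtain ⟨x, hxseg, hxfr⟩ := hopen.exists_mem_openSegment_frontier hp hq hz hzΩ
  have hzero : ⟪x - p, ν x⟫ = 0 :=
    inner_sub_eq_zero_of_mem_openSegment hxseg (h x hxfr p hp) (h x hxfr q hq)
  exact (hopen.inner_sub_pos (hν x hxfr) (h x hxfr) hp).ne' hzero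

/-- If a bounded, open, connected set `Ω ⊆ ℝ^d` admits a map `ν` which is nonzero on the
frontier `∂Ω` and satisfies `⟪x - p, ν x⟫ ≥ 0` for all `x ∈ ∂Ω` and `p ∈ Ω`,
then `Ω` is convex. -/
theorem frontier_inner_nonneg_convex
    (d : ℕ) (Ω : Set (EuclideanSpace ℝ (Fin d)))
    (hopen : IsOpen Ω) (hbd : Bornology.IsBounded Ω) (hconn : IsConnected Ω)
    (ν : EuclideanSpace ℝ (Fin d) → EuclideanSpace ℝ (Fin d))
    (hν : ∀ x ∈ frontier Ω, ν x ≠ 0)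
    (h : ∀ x ∈ frontier Ω, ∀ p ∈ Ω, 0 ≤ ⟪x - p, ν x⟫) :
    Convex ℝ Ω :=
  frontier_inner_nonneg_convex_general d Ω hopen ν hν h
end

section
/- Let r > 0, p ∈ ℝ², and let T be the inversion in the sphere of radius r centered at p, T x = (r²/|x − p|²)(x − p) + p for x ≠ p. Then for every Borel set s ⊆ ℝ² \ {p}, the 1-dimensional Hausdorff measure satisfies H¹(T(s)) = ∫_s (r²/|x − p|²) dH¹(x). (This is the change of variables formula ds(x*) = (r²/|x|²) ds(x) for arc length under inversion.) -/
open MeasureTheory Filter Topology Set EuclideanGeometry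
open scoped ENNReal

/-! Inversion scales distances conformally: `dist (T x) (T y) = ρ x * ρ y * dist x y` with
`ρ x = r / dist x p`. On a piece `u` of `s` on which `a ≤ ρ < a t`, `T` is Lipschitz with
constant `(a t)²` and expands distances by at least `a²`, so both `μH[d] (T '' u)` and
`∫⁻ x in u, (ρ x ^ 2) ^ d` lie between `(a²)^d μH[d] u` and `(t²)^d (a²)^d μH[d] u`. Cutting `s`
into the countably many pieces `tⁿ ≤ ρ < tⁿ⁺¹` and letting `t → 1` gives the equality. -/

theorem ENNReal.le_of_forall_one_lt_le_mul_of_tendsto {a b : ℝ≥0∞} {k : ℝ → ℝ≥0∞}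
    (hk : Tendsto k (𝓝[>] 1) (𝓝 1)) (h : ∀ t, 1 < t → a ≤ k t * b) : a ≤ b := by
  have hkb : Tendsto (fun t ↦ k t * b) (𝓝[>] 1) (𝓝 b) := by
    simpa using ENNReal.Tendsto.mul_const hk (Or.inl one_ne_zero)
  exact ge_of_tendsto hkb (eventually_nhdsWithin_of_forall h)

section Partition

variable {X : Type*} [MeasurableSpace X] {ρ : X → ℝ} {s : Set X}

theorem pairwise_disjoint_Ico_zpow_mul {K : Type*} [Field K] [LinearOrder K]
    [IsStrictOrderedRing K] {t : K} (ht : 1 < t) :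
    Pairwise (Function.onFun Disjoint fun n : ℤ ↦ Ico (t ^ n) (t ^ n * t)) := by
  intro m n hmn
  wlog h : m < n generalizing m n
  · exact (this hmn.symm (hmn.symm.lt_of_le (not_lt.1 h))).symm
  refine disjoint_left.2 fun x hxm hxn ↦ (hxm.2.trans_le ?_).not_ge hxn.1
  rw [← zpow_add_one₀ (by positivity)]
  exact zpow_le_zpow_right₀ ht.le h

theorem measure_eq_tsum_inter_preimage_Ico_zpow (μ : Measure X) (hρ : Measurable ρ)
    (hs : MeasurableSet s) (hρs : ∀ x ∈ s, 0 < ρ x) {t : ℝ} (ht : 1 < t) :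
    μ s = ∑' n : ℤ, μ (s ∩ ρ ⁻¹' Ico (t ^ n) (t ^ n * t)) := by
  have hcover : ⋃ n : ℤ, s ∩ ρ ⁻¹' Ico (t ^ n) (t ^ n * t) = s := by
    refine (iUnion_subset fun n ↦ inter_subset_left).antisymm fun x hx ↦ ?_
    obtain ⟨n, hn⟩ := exists_mem_Ico_zpow (hρs x hx) ht
    rw [zpow_add_one₀ (by positivity)] at hn
    exact mem_iUnion.2 ⟨n, hx, hn⟩
  rw [← measure_iUnion, hcover]
  · exact fun m n hmn ↦
      ((pairwise_disjoint_Ico_zpow_mul ht hmn).preimage ρ).inter_left' s |>.inter_right' s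
  · exact fun n ↦ hs.inter (hρ measurableSet_Ico)

theorem measure_le_of_forall_inter_preimage_Ico_le_mul (μ ν : Measure X) (hρ : Measurable ρ)
    (hs : MeasurableSet s) (hρs : ∀ x ∈ s, 0 < ρ x) {k : ℝ → ℝ≥0∞}
    (hk : Tendsto k (𝓝[>] 1) (𝓝 1))
    (h : ∀ t, 1 < t → ∀ a, 0 < a →
      μ (s ∩ ρ ⁻¹' Ico a (a * t)) ≤ k t * ν (s ∩ ρ ⁻¹' Ico a (a * t))) :
    μ s ≤ ν s := by
  refine ENNReal.le_of_forall_one_lt_le_mul_of_tendsto hk fun t ht ↦ ?_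
  calc μ s = ∑' n : ℤ, μ (s ∩ ρ ⁻¹' Ico (t ^ n) (t ^ n * t)) :=
        measure_eq_tsum_inter_preimage_Ico_zpow μ hρ hs hρs ht
    _ ≤ ∑' n : ℤ, k t * ν (s ∩ ρ ⁻¹' Ico (t ^ n) (t ^ n * t)) :=
        ENNReal.tsum_le_tsum fun n ↦ h t ht _ (zpow_pos (by positivity) n)
    _ = k t * ν s := by
        rw [ENNReal.tsum_mul_left, ← measure_eq_tsum_inter_preimage_Ico_zpow ν hρ hs hρs ht]

end Partition

section Hausdorff

variable {X Y : Type*} [MetricSpace X] [MeasurableSpace X] [BorelSpace X]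
  [MetricSpace Y] [MeasurableSpace Y] [BorelSpace Y] {f : X → Y} {d : ℝ}

theorem hausdorffMeasure_image_le_of_dist_le {s : Set X} {b : ℝ} (hb : 0 ≤ b)
    (h : ∀ x ∈ s, ∀ y ∈ s, dist (f x) (f y) ≤ b * dist x y) (hd : 0 ≤ d) :
    μH[d] (f '' s) ≤ ENNReal.ofReal b ^ d * μH[d] s :=
  (LipschitzOnWith.of_dist_le_mul fun x hx y hy ↦ by
    rw [Real.coe_toNNReal b hb]; exact h x hx y hy).hausdorffMeasure_image_le hd

theorem le_hausdorffMeasure_image_of_le_dist {s : Set X} {a : ℝ} (ha : 0 < a)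
    (h : ∀ x ∈ s, ∀ y ∈ s, a * dist x y ≤ dist (f x) (f y)) (hd : 0 ≤ d) :
    ENNReal.ofReal a ^ d * μH[d] s ≤ μH[d] (f '' s) := by
  have hanti : AntilipschitzWith (a⁻¹).toNNReal (s.domRestrict f) :=
    AntilipschitzWith.of_le_mul_dist fun x y ↦ by
      rw [Real.coe_toNNReal _ (inv_nonneg.2 ha.le), le_inv_mul_iff₀ ha]
      exact h x x.2 y y.2
  have hle := hanti.le_hausdorffMeasure_image hd univ
  rw [image_univ, range_domRestrict, ← (isometry_subtype_coe (s := s)).hausdorffMeasure_image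
    (Or.inl hd), image_univ, Subtype.range_coe] at hle
  calc ENNReal.ofReal a ^ d * μH[d] s
      ≤ ENNReal.ofReal a ^ d * (ENNReal.ofReal a⁻¹ ^ d * μH[d] (f '' s)) := by gcongr; exact hle
    _ = μH[d] (f '' s) := by
        rw [← mul_assoc, ← ENNReal.mul_rpow_of_nonneg _ _ hd, ← ENNReal.ofReal_mul ha.le,
          mul_inv_cancel₀ ha.ne', ENNReal.ofReal_one, ENNReal.one_rpow, one_mul]

theorem hausdorffMeasure_image_mem_Icc_of_dist_eq {ρ : X → ℝ} {u : Set X} {a b : ℝ} (ha : 0 < a)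
    (hρu : ∀ x ∈ u, ρ x ∈ Icc a b)
    (hfu : ∀ x ∈ u, ∀ y ∈ u, dist (f x) (f y) = ρ x * ρ y * dist x y) (hd : 0 ≤ d) :
    μH[d] (f '' u) ∈
      Icc (ENNReal.ofReal (a ^ 2) ^ d * μH[d] u) (ENNReal.ofReal (b ^ 2) ^ d * μH[d] u) := by
  refine ⟨le_hausdorffMeasure_image_of_le_dist (by positivity) (fun x hx y hy ↦ ?_) hd,
    hausdorffMeasure_image_le_of_dist_le (sq_nonneg b) (fun x hx y hy ↦ ?_) hd⟩
  all_goals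
    obtain ⟨hax, hxb⟩ := hρu x hx
    obtain ⟨hay, hyb⟩ := hρu y hy
    rw [hfu x hx y hy, sq]
    gcongr <;> linarith

end Hausdorff

theorem setLIntegral_ofReal_sq_rpow_mem_Icc {X : Type*} [MeasurableSpace X] (μ : Measure X)
    {ρ : X → ℝ} (hρ : Measurable ρ) {u : Set X} {a b : ℝ} (ha : 0 ≤ a)
    (hρu : ∀ x ∈ u, ρ x ∈ Icc a b) {d : ℝ} (hd : 0 ≤ d) :
    ∫⁻ x in u, ENNReal.ofReal (ρ x ^ 2) ^ d ∂μ ∈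
      Icc (ENNReal.ofReal (a ^ 2) ^ d * μ u) (ENNReal.ofReal (b ^ 2) ^ d * μ u) := by
  rw [← setLIntegral_const, ← setLIntegral_const]
  refine ⟨setLIntegral_mono (by fun_prop) fun x hx ↦ ?_,
    setLIntegral_mono measurable_const fun x hx ↦ ?_⟩ <;>
  · obtain ⟨hax, hxb⟩ := hρu x hx
    gcongr <;> linarith

theorem hausdorffMeasure_image_eq_setLIntegral_of_dist_eq {X Y : Type*} [MetricSpace X]
    [MeasurableSpace X] [BorelSpace X] [MetricSpace Y] [MeasurableSpace Y] [BorelSpace Y]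
    {f : X → Y} (hf : MeasurableEmbedding f) {ρ : X → ℝ} (hρ : Measurable ρ) {s : Set X}
    (hs : MeasurableSet s) (hρs : ∀ x ∈ s, 0 < ρ x)
    (hfs : ∀ x ∈ s, ∀ y ∈ s, dist (f x) (f y) = ρ x * ρ y * dist x y) {d : ℝ} (hd : 0 ≤ d) :
    μH[d] (f '' s) = ∫⁻ x in s, ENNReal.ofReal (ρ x ^ 2) ^ d ∂μH[d] := by
  set k : ℝ → ℝ≥0∞ := fun t ↦ ENNReal.ofReal (t ^ 2) ^ d
  have hk : Tendsto k (𝓝[>] 1) (𝓝 1) := by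
    have hcont : Continuous k :=
      ENNReal.continuous_rpow_const.comp (ENNReal.continuous_ofReal.comp (continuous_pow 2))
    simpa [k] using (hcont.tendsto 1).mono_left nhdsWithin_le_nhds
  set ν₁ := (μH[d] : Measure Y).comap f
  set ν₂ := (μH[d] : Measure X).withDensity fun x ↦ ENNReal.ofReal (ρ x ^ 2) ^ d
  have hpiece : ∀ t, 1 < t → ∀ a, 0 < a →
      let u := s ∩ ρ ⁻¹' Ico a (a * t)
      ν₁ u ∈ Icc (k a * μH[d] u) (k t * (k a * μH[d] u)) ∧
        ν₂ u ∈ Icc (k a * μH[d] u) (k t * (k a * μH[d] u)) := by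
    intro t ht a ha u
    have hρu : ∀ x ∈ u, ρ x ∈ Icc a (a * t) := fun x hx ↦ Ico_subset_Icc_self hx.2
    have hscale : k (a * t) = k t * k a := by
      simp only [k]
      rw [← ENNReal.mul_rpow_of_nonneg _ _ hd, ← ENNReal.ofReal_mul (sq_nonneg t), mul_pow,
        mul_comm]
    rw [hf.comap_apply, withDensity_apply _ (hs.inter (hρ measurableSet_Ico)), ← mul_assoc,
      ← hscale]
    exact ⟨hausdorffMeasure_image_mem_Icc_of_dist_eq ha hρu (fun x hx y hy ↦ hfs x hx.1 y hy.1) hd,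
      setLIntegral_ofReal_sq_rpow_mem_Icc _ hρ ha.le hρu hd⟩
  rw [← hf.comap_apply, ← withDensity_apply _ hs]
  refine le_antisymm
    (measure_le_of_forall_inter_preimage_Ico_le_mul ν₁ ν₂ hρ hs hρs hk fun t ht a ha ↦ ?_)
    (measure_le_of_forall_inter_preimage_Ico_le_mul ν₂ ν₁ hρ hs hρs hk fun t ht a ha ↦ ?_)
  · obtain ⟨h₁, h₂⟩ := hpiece t ht a ha
    exact h₁.2.trans (by gcongr; exact h₂.1)
  · obtain ⟨h₁, h₂⟩ := hpiece t ht a ha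
    exact h₂.2.trans (by gcongr; exact h₁.1)

section Inversion

variable {V P : Type*} [NormedAddCommGroup V] [InnerProductSpace ℝ V] [MetricSpace P]
  [NormedAddTorsor V P] [MeasurableSpace P] [BorelSpace P]

theorem EuclideanGeometry.measurable_inversion (c : P) (R : ℝ) : Measurable (inversion c R) :=
  measurable_of_continuousOn_compl_singleton c <|
    continuousOn_const.inversion continuousOn_const continuousOn_id fun _ hx ↦ hx

theorem EuclideanGeometry.measurableEmbedding_inversion (c : P) {R : ℝ} (hR : R ≠ 0) :
    MeasurableEmbedding (inversion c R) :=
  (MeasurableEquiv.mk (inversion_involutive c hR).toPerm (measurable_inversion c R)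
    (measurable_inversion c R)).measurableEmbedding

theorem EuclideanGeometry.hausdorffMeasure_image_inversion (c : P) {R : ℝ} (hR : R ≠ 0)
    {s : Set P} (hs : MeasurableSet s) (hcs : c ∉ s) {d : ℝ} (hd : 0 ≤ d) :
    μH[d] (inversion c R '' s) = ∫⁻ x in s, ENNReal.ofReal (R ^ 2 / dist x c ^ 2) ^ d ∂μH[d] := by
  have hne : ∀ x ∈ s, x ≠ c := fun x hx ↦ ne_of_mem_of_not_mem hx hcs
  simp_rw [← sq_abs R, ← div_pow]
  refine hausdorffMeasure_image_eq_setLIntegral_of_dist_eq (measurableEmbedding_inversion c hR)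
    (by fun_prop) hs (fun x hx ↦ div_pos (abs_pos.2 hR) (dist_pos.2 (hne x hx)))
    (fun x hx y hy ↦ ?_) hd
  rw [dist_inversion_inversion (hne x hx) (hne y hy), div_mul_div_comm, ← sq, sq_abs]

end Inversion

/-- Change of variables for arc length (1-dimensional Hausdorff measure) in `ℝ²` under
inversion in the sphere of radius `r` centered at `p`:
`H¹(T(s)) = ∫_s (r²/|x − p|²) dH¹(x)` for Borel sets `s ⊆ ℝ² \ {p}`. -/
theorem hausdorff_one_inversion_dim2
    (r : ℝ) (hr : 0 < r) (p : EuclideanSpace ℝ (Fin 2))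
    (T : EuclideanSpace ℝ (Fin 2) → EuclideanSpace ℝ (Fin 2))
    (hT : ∀ x : EuclideanSpace ℝ (Fin 2), x ≠ p →
      T x = (r ^ 2 / ‖x - p‖ ^ 2) • (x - p) + p)
    (s : Set (EuclideanSpace ℝ (Fin 2))) (hs : MeasurableSet s) (hps : p ∉ s) :
    μH[1] (T '' s) = ∫⁻ x in s, ENNReal.ofReal (r ^ 2 / ‖x - p‖ ^ 2) ∂μH[1] := by
  have hT_eq : T '' s = inversion p r '' s := image_congr fun x hx ↦ by
    rw [hT x (ne_of_mem_of_not_mem hx hps), inversion, dist_eq_norm, div_pow, vsub_eq_sub,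
      vadd_eq_add]
  rw [hT_eq, hausdorffMeasure_image_inversion p hr.ne' hs hps zero_le_one]
  simp only [dist_eq_norm, ENNReal.rpow_one]
end

section
/- Let r > 0 and let T be the inversion in the sphere of radius r centered at the origin of ℝ³. For x ≠ 0 let R_x := I − 2(x/|x|)(x/|x|)ᵗ be the reflection matrix. Then for all nonzero x, y ∈ ℝ³ with x ≠ y and every n ∈ ℝ³, ⟨R_x n, (Tx − Ty)/(4π|Tx − Ty|³)⟩ = (|x|³|y|/r⁴) ⟨n, (x − y)/(4π|x − y|³)⟩ + (|x||y|/r⁴) ⟨n, x⟩ · (−1/(4π|x − y|)). Equivalently, ⟨R_x n, ∇Γ(Tx − Ty)⟩ = (|x|³|y|/r⁴)⟨n, ∇Γ(x−y)⟩ + (|x||y|/r⁴)⟨n, x⟩ Γ(x−y). -/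
/-!
Inversion scales distances by `r² / (‖x‖ ‖y‖)`. Expanding `⟪R_x n, x / ‖x‖² - y / ‖y‖²⟫` and
eliminating `⟪x, y⟫` by polarization, `2 ⟪x, y⟫ = ‖x‖² + ‖y‖² - ‖x - y‖²`, splits it into a
multiple of `⟪n, x - y⟫` (the `∇Γ` term) and a multiple of `⟪n, x⟫ ‖x - y‖²` (the `Γ` term).
-/

open scoped Real RealInnerProductSpace

section Inversion

variable {F : Type*} [NormedAddCommGroup F] [InnerProductSpace ℝ F] {x y : F}

theorem norm_div_norm_sq_smul_sub (hx : x ≠ 0) (hy : y ≠ 0) (r : ℝ) :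
    ‖(r ^ 2 / ‖x‖ ^ 2) • x - (r ^ 2 / ‖y‖ ^ 2) • y‖ = r ^ 2 / (‖x‖ * ‖y‖) * ‖x - y‖ := by
  simpa only [div_pow, dist_eq_norm] using dist_div_norm_sq_smul hx hy r

theorem inner_reflection_div_norm_sq_smul_sub (hx : x ≠ 0) (hy : y ≠ 0) (n : F) (r : ℝ) :
    ⟪n - (2 * ⟪x, n⟫ / ‖x‖ ^ 2) • x, (r ^ 2 / ‖x‖ ^ 2) • x - (r ^ 2 / ‖y‖ ^ 2) • y⟫ =
      r ^ 2 / ‖y‖ ^ 2 * (⟪n, x - y⟫ - ⟪n, x⟫ * ‖x - y‖ ^ 2 / ‖x‖ ^ 2) := by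
  have polarization : ⟪x, y⟫ = (‖x‖ ^ 2 + ‖y‖ ^ 2 - ‖x - y‖ ^ 2) / 2 := by
    rw [norm_sub_sq_real]; ring
  simp only [inner_sub_left, inner_sub_right, real_inner_smul_left, real_inner_smul_right,
    real_inner_self_eq_norm_sq, real_inner_comm x n, real_inner_comm y n, polarization]
  field_simp
  ring

end Inversion

theorem grad_fundamental_solution_inversion_dim3_general
    (r : ℝ)
    (T : EuclideanSpace ℝ (Fin 3) → EuclideanSpace ℝ (Fin 3))
    (hT : ∀ x : EuclideanSpace ℝ (Fin 3), x ≠ 0 → T x = (r ^ 2 / ‖x‖ ^ 2) • x)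
    (R : EuclideanSpace ℝ (Fin 3) → EuclideanSpace ℝ (Fin 3) → EuclideanSpace ℝ (Fin 3))
    (hR : ∀ x v : EuclideanSpace ℝ (Fin 3), x ≠ 0 →
      R x v = v - (2 * ⟪x, v⟫ / ‖x‖ ^ 2) • x)
    (x y : EuclideanSpace ℝ (Fin 3)) (hx : x ≠ 0) (hy : y ≠ 0)
    (n : EuclideanSpace ℝ (Fin 3)) :
    ⟪R x n, (4 * π * ‖T x - T y‖ ^ 3)⁻¹ • (T x - T y)⟫ =
      (‖x‖ ^ 3 * ‖y‖ / r ^ 4) * ⟪n, (4 * π * ‖x - y‖ ^ 3)⁻¹ • (x - y)⟫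
        + (‖x‖ * ‖y‖ / r ^ 4) * ⟪n, x⟫ * (-1 / (4 * π * ‖x - y‖)) := by
  rw [hT x hx, hT y hy, hR x n hx, real_inner_smul_right, real_inner_smul_right,
    inner_reflection_div_norm_sq_smul_sub hx hy, norm_div_norm_sq_smul_sub hx hy]
  field_simp
  ring

/-- Transformation of the gradient of the 3D fundamental solution
`∇Γ(z) = z/(4π|z|³)` under inversion in a sphere centered at the origin:
`⟨R_x n, ∇Γ(Tx − Ty)⟩ = (|x|³|y|/r⁴)⟨n, ∇Γ(x−y)⟩ + (|x||y|/r⁴)⟨n, x⟩ Γ(x−y)`,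
where `R_x = I − 2(x/|x|)(x/|x|)ᵗ` is the reflection matrix. -/
theorem grad_fundamental_solution_inversion_dim3
    (r : ℝ) (hr : 0 < r)
    (T : EuclideanSpace ℝ (Fin 3) → EuclideanSpace ℝ (Fin 3))
    (hT : ∀ x : EuclideanSpace ℝ (Fin 3), x ≠ 0 → T x = (r ^ 2 / ‖x‖ ^ 2) • x)
    (R : EuclideanSpace ℝ (Fin 3) → EuclideanSpace ℝ (Fin 3) → EuclideanSpace ℝ (Fin 3))
    (hR : ∀ x v : EuclideanSpace ℝ (Fin 3), x ≠ 0 →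
      R x v = v - (2 * ⟪x, v⟫ / ‖x‖ ^ 2) • x)
    (x y : EuclideanSpace ℝ (Fin 3)) (hx : x ≠ 0) (hy : y ≠ 0) (hxy : x ≠ y)
    (n : EuclideanSpace ℝ (Fin 3)) :
    ⟪R x n, (4 * π * ‖T x - T y‖ ^ 3)⁻¹ • (T x - T y)⟫ =
      (‖x‖ ^ 3 * ‖y‖ / r ^ 4) * ⟪n, (4 * π * ‖x - y‖ ^ 3)⁻¹ • (x - y)⟫
        + (‖x‖ * ‖y‖ / r ^ 4) * ⟪n, x⟫ * (-1 / (4 * π * ‖x - y‖)) :=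
  grad_fundamental_solution_inversion_dim3_general r T hT R hR x y hx hy n
end

section
/- Let Ω ⊆ ℝ³ be a bounded open set whose frontier ∂Ω does not contain the origin, let r > 0, and let T be the inversion in the sphere of radius r centered at the origin. Let σ be the 2-dimensional Hausdorff measure restricted to ∂Ω, and σ* the 2-dimensional Hausdorff measure restricted to ∂Ω* := T(∂Ω). Let φ : ℝ³ → ℝ be bounded and Borel measurable with σ(∂Ω) < ∞, and define φ* on ∂Ω* by φ*(T y) := φ(y)|y|³/r³. Then for every x ∈ ℝ³ with x ≠ 0 such that y ↦ Γ(x − y)φ(y) is σ-integrable, ∫_{∂Ω*} Γ(Tx − z) φ*(z) dσ*(z) = (|x|/r) ∫_{∂Ω} Γ(x − y) φ(y) dσ(y), where Γ(z) = −1/(4π|z|). -/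
/-!
Let `ι` be the inversion in the sphere of radius `R` about `c`. Since
`dist (ι y) (ι z) = R² / (dist y c * dist z c) * dist y z`, on an annulus `a ≤ dist y c ≤ κ a`
the map `ι` is Lipschitz with constant `R² / a²`, and so is its inverse `ι` on the image with
constant `κ² a² / R²`. Summing over the annuli `κ ^ k ≤ dist y c < κ ^ (k + 1)` and letting
`κ → 1` shows that the push-forward of `μH[d]` under `ι` is `μH[d]` with density
`(R² / dist y c²) ^ d`. For `d = 2` this density `r⁴ / |y|⁴`, the factor `|y|³ / r³` in `φ*` and
`|Tx - Ty| = r² |x - y| / (|x| |y|)` multiply to `|x| / r`.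
-/

open MeasureTheory EuclideanGeometry Filter Set
open scoped Real ENNReal NNReal Topology

theorem ENNReal.le_of_forall_one_lt_le_ofReal_sq_rpow_mul {a b : ℝ≥0∞} {d : ℝ}
    (h : ∀ κ : ℝ, 1 < κ → a ≤ ENNReal.ofReal (κ ^ 2) ^ d * b) : a ≤ b := by
  have hcont : Continuous fun κ : ℝ => ENNReal.ofReal (κ ^ 2) ^ d :=
    ENNReal.continuous_rpow_const.comp (ENNReal.continuous_ofReal.comp (continuous_pow 2))
  have hlim : Tendsto (fun κ : ℝ => ENNReal.ofReal (κ ^ 2) ^ d * b) (𝓝[>] 1) (𝓝 b) := by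
    simpa using ENNReal.Tendsto.mul_const ((hcont.tendsto 1).mono_left nhdsWithin_le_nhds)
      (Or.inl (by simp))
  exact ge_of_tendsto hlim (eventually_nhdsWithin_of_forall h)

theorem measure_le_mul_of_forall_subset_annulus {X : Type*} [MetricSpace X] [MeasurableSpace X]
    [OpensMeasurableSpace X] {ν ν' : Measure X} {c : X} {κ : ℝ} (hκ : 1 < κ) {C : ℝ≥0∞}
    (h : ∀ a > 0, ∀ s, MeasurableSet s → s ⊆ {y | a ≤ dist y c ∧ dist y c ≤ κ * a} →
      ν s ≤ C * ν' s)
    {t : Set X} (ht : MeasurableSet t) (hct : c ∉ t) : ν t ≤ C * ν' t := by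
  set A : ℤ → Set X := fun k => t ∩ (dist · c) ⁻¹' Ico (κ ^ k) (κ ^ (k + 1))
  have hA : ∀ k, MeasurableSet (A k) := fun k =>
    ht.inter (measurableSet_Ico.preimage (continuous_id.dist continuous_const).measurable)
  have hdisj : Pairwise (Function.onFun Disjoint A) := by
    refine (pairwise_disjoint_on A).2 fun k l hkl => disjoint_left.2 fun y hyk hyl => ?_
    have : κ ^ (k + 1) ≤ κ ^ l := zpow_le_zpow_right₀ hκ.le (by omega)
    exact (hyk.2.2.trans_le this).not_ge hyl.2.1
  have hcover : t = ⋃ k, A k := by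
    refine (iUnion_subset fun k => inter_subset_left).antisymm' fun y hy => mem_iUnion.2 ?_
    obtain ⟨k, hk⟩ := exists_mem_Ico_zpow (dist_pos.2 (ne_of_mem_of_not_mem hy hct)) hκ
    exact ⟨k, hy, hk⟩
  have hpiece : ∀ k, ν (A k) ≤ C * ν' (A k) := fun k =>
    h _ (zpow_pos (by linarith) k) _ (hA k) fun y hy =>
      ⟨hy.2.1, by rw [mul_comm, ← zpow_add_one₀ (by positivity)]; exact hy.2.2.le⟩
  calc ν t = ∑' k, ν (A k) := by rw [hcover, measure_iUnion hdisj hA]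
    _ ≤ ∑' k, C * ν' (A k) := ENNReal.tsum_le_tsum hpiece
    _ = C * ν' t := by rw [ENNReal.tsum_mul_left, hcover, measure_iUnion hdisj hA]

namespace EuclideanGeometry

noncomputable def inversionJacobian {X : Type*} [PseudoMetricSpace X] (c : X) (R d : ℝ) (y : X) :
    ℝ≥0 :=
  (R ^ 2 / dist y c ^ 2).toNNReal ^ d

theorem measurable_inversionJacobian {X : Type*} [PseudoMetricSpace X] [MeasurableSpace X]
    [OpensMeasurableSpace X] (c : X) (R d : ℝ) : Measurable (inversionJacobian c R d) := by
  unfold inversionJacobian; fun_prop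

theorem coe_inversionJacobian {X : Type*} [PseudoMetricSpace X] {c : X} {R d : ℝ} (hd : 0 ≤ d)
    (y : X) : (inversionJacobian c R d y : ℝ≥0∞) = ENNReal.ofReal (R ^ 2 / dist y c ^ 2) ^ d :=
  ENNReal.coe_rpow_of_nonneg _ hd

section AffineSpace

variable {V P : Type*} [NormedAddCommGroup V] [InnerProductSpace ℝ V] [MetricSpace P]
  [NormedAddTorsor V P] {c : P} {R a : ℝ}

theorem lipschitzOnWith_inversion (c : P) (R : ℝ) (ha : 0 < a) :
    LipschitzOnWith (R ^ 2 / a ^ 2).toNNReal (inversion c R) {y | a ≤ dist y c} := by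
  refine LipschitzOnWith.of_dist_le_mul fun y (hy : a ≤ dist y c) z (hz : a ≤ dist z c) => ?_
  rw [dist_inversion_inversion (dist_pos.1 (ha.trans_le hy)) (dist_pos.1 (ha.trans_le hz)),
    Real.coe_toNNReal _ (by positivity)]
  gcongr
  rw [sq]
  gcongr

variable [MeasurableSpace P] [BorelSpace P] {d κ : ℝ} {s : Set P}

theorem hausdorffMeasure_image_inversion_le (hd : 0 ≤ d) (ha : 0 < a)
    (hs : s ⊆ {y | a ≤ dist y c}) :
    μH[d] (inversion c R '' s) ≤ ENNReal.ofReal (R ^ 2 / a ^ 2) ^ d * μH[d] s :=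
  ((lipschitzOnWith_inversion c R ha).mono hs).hausdorffMeasure_image_le hd

theorem hausdorffMeasure_image_inversion_le_mul_lintegral (hd : 0 ≤ d) (ha : 0 < a) (hκ : 0 < κ)
    (hs : s ⊆ {y | a ≤ dist y c ∧ dist y c ≤ κ * a}) :
    μH[d] (inversion c R '' s) ≤
      ENNReal.ofReal (κ ^ 2) ^ d * ∫⁻ y in s, inversionJacobian c R d y ∂μH[d] := by
  have hJ : ∀ y ∈ s, ENNReal.ofReal (R ^ 2 / (κ * a) ^ 2) ^ d ≤ inversionJacobian c R d y := by
    intro y hy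
    rw [coe_inversionJacobian hd]
    gcongr
    exacts [pow_pos (ha.trans_le (hs hy).1) 2, (hs hy).2]
  calc μH[d] (inversion c R '' s)
      ≤ ENNReal.ofReal (R ^ 2 / a ^ 2) ^ d * μH[d] s :=
        hausdorffMeasure_image_inversion_le hd ha fun y hy => (hs hy).1
    _ = ENNReal.ofReal (κ ^ 2) ^ d * (ENNReal.ofReal (R ^ 2 / (κ * a) ^ 2) ^ d * μH[d] s) := by
        rw [← mul_assoc, ← ENNReal.mul_rpow_of_nonneg _ _ hd, ← ENNReal.ofReal_mul (by positivity)]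
        congr 3
        field_simp
    _ ≤ ENNReal.ofReal (κ ^ 2) ^ d * ∫⁻ y in s, inversionJacobian c R d y ∂μH[d] := by
        rw [← setLIntegral_const]
        exact mul_le_mul_right
          (setLIntegral_mono (measurable_inversionJacobian c R d).coe_nnreal_ennreal hJ) _

theorem lintegral_inversionJacobian_le_mul_hausdorffMeasure (hR : R ≠ 0) (hd : 0 ≤ d)
    (ha : 0 < a) (hκ : 0 < κ) (hs : s ⊆ {y | a ≤ dist y c ∧ dist y c ≤ κ * a}) :
    ∫⁻ y in s, inversionJacobian c R d y ∂μH[d] ≤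
      ENNReal.ofReal (κ ^ 2) ^ d * μH[d] (inversion c R '' s) := by
  have hJ : ∀ y ∈ s, (inversionJacobian c R d y : ℝ≥0∞) ≤ ENNReal.ofReal (R ^ 2 / a ^ 2) ^ d := by
    intro y hy
    rw [coe_inversionJacobian hd]
    gcongr
    exact (hs hy).1
  have himage : inversion c R '' s ⊆ {z | R ^ 2 / (κ * a) ≤ dist z c} := by
    rintro _ ⟨y, hy, rfl⟩
    rw [mem_ofPred_eq, dist_inversion_center]
    gcongr
    exacts [ha.trans_le (hs hy).1, (hs hy).2]
  calc ∫⁻ y in s, inversionJacobian c R d y ∂μH[d]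
      ≤ ENNReal.ofReal (R ^ 2 / a ^ 2) ^ d * μH[d] s := by
        rw [← setLIntegral_const]
        exact setLIntegral_mono measurable_const hJ
    _ = ENNReal.ofReal (R ^ 2 / a ^ 2) ^ d *
          μH[d] (inversion c R '' (inversion c R '' s)) := by
        rw [← image_comp, (inversion_involutive c hR).comp_self, image_id]
    _ ≤ ENNReal.ofReal (R ^ 2 / a ^ 2) ^ d *
          (ENNReal.ofReal (R ^ 2 / (R ^ 2 / (κ * a)) ^ 2) ^ d * μH[d] (inversion c R '' s)) := by
        gcongr
        exact hausdorffMeasure_image_inversion_le hd (by positivity) himage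
    _ = ENNReal.ofReal (κ ^ 2) ^ d * μH[d] (inversion c R '' s) := by
        rw [← mul_assoc, ← ENNReal.mul_rpow_of_nonneg _ _ hd, ← ENNReal.ofReal_mul (by positivity)]
        congr 3
        field_simp

end AffineSpace

section InnerProductSpace

variable {E : Type*} [NormedAddCommGroup E] [InnerProductSpace ℝ E]

theorem inversion_zero_apply (R : ℝ) (y : E) : inversion 0 R y = (R ^ 2 / ‖y‖ ^ 2) • y := by
  simp [inversion, div_pow]

variable [MeasurableSpace E] [BorelSpace E] {c : E} {R d : ℝ}

theorem measurable_inversion_s7 (c : E) (R : ℝ) : Measurable (inversion c R) := by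
  unfold inversion; fun_prop

theorem measurableEmbedding_inversion_s7 (c : E) (hR : R ≠ 0) :
    MeasurableEmbedding (inversion c R) :=
  .of_measurable_inverse (measurable_inversion_s7 c R)
    ((inversion_surjective c hR).range_eq ▸ MeasurableSet.univ) (measurable_inversion_s7 c R)
    (inversion_involutive c hR).leftInverse

theorem map_inversion_hausdorffMeasure (hR : R ≠ 0) (hd : 0 ≤ d) :
    Measure.map (inversion c R) μH[d] =
      μH[d].withDensity fun y => inversionJacobian c R d y := by
  set ν := Measure.map (inversion c R) μH[d]
  set ν' := μH[d].withDensity fun y => (inversionJacobian c R d y : ℝ≥0∞)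
  have hν : ∀ t, MeasurableSet t → ν t = μH[d] (inversion c R '' t) := fun t ht => by
    rw [Measure.map_apply (measurable_inversion_s7 c R) ht,
      (inversion_involutive c hR).image_eq_preimage_symm]
  have hν' : ∀ t, MeasurableSet t → ν' t = ∫⁻ y in t, inversionJacobian c R d y ∂μH[d] :=
    fun t ht => withDensity_apply _ ht
  have hcompl : ∀ t, MeasurableSet t → c ∉ t → ν t = ν' t := by
    intro t ht hct
    apply le_antisymm <;>
      refine ENNReal.le_of_forall_one_lt_le_ofReal_sq_rpow_mul (d := d) fun κ hκ => ?_ <;>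
      refine measure_le_mul_of_forall_subset_annulus hκ (fun a ha s hs hsa => ?_) ht hct <;>
      rw [hν s hs, hν' s hs]
    · exact hausdorffMeasure_image_inversion_le_mul_lintegral hd ha (by linarith) hsa
    · exact lintegral_inversionJacobian_le_mul_hausdorffMeasure hR hd ha (by linarith) hsa
  have hcenter : ν {c} = ν' {c} := by
    rw [hν _ (measurableSet_singleton c), hν' _ (measurableSet_singleton c), image_singleton,
      inversion_self, lintegral_singleton]
    rcases hd.eq_or_lt with rfl | hd
    · simp [inversionJacobian]
    · have := Measure.nullSingletonClass_hausdorff E hd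
      simp
  ext t ht
  rw [← measure_inter_add_sdiff t (measurableSet_singleton c) (μ := ν),
    ← measure_inter_add_sdiff t (measurableSet_singleton c) (μ := ν'),
    hcompl _ (ht.diff (measurableSet_singleton c)) fun h => h.2 rfl]
  rcases subset_singleton_iff_eq.1 (inter_subset_right (s := t) (t := {c})) with h | h <;>
    simp [h, hcenter]

theorem measurePreserving_inversion (hR : R ≠ 0) (hd : 0 ≤ d) :
    MeasurePreserving (inversion c R)
      (μH[d].withDensity fun y => inversionJacobian c R d y) μH[d] := by
  refine ⟨measurable_inversion_s7 c R, ?_⟩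
  rw [← map_inversion_hausdorffMeasure hR hd,
    Measure.map_map (measurable_inversion_s7 c R) (measurable_inversion_s7 c R),
    (inversion_involutive c hR).comp_self, Measure.map_id]

theorem setIntegral_image_inversion {G : Type*} [NormedAddCommGroup G] [NormedSpace ℝ G]
    (hR : R ≠ 0) (hd : 0 ≤ d) (g : E → G) {s : Set E} (hs : MeasurableSet s) :
    ∫ z in inversion c R '' s, g z ∂μH[d] =
      ∫ y in s, inversionJacobian c R d y • g (inversion c R y) ∂μH[d] := by
  rw [(measurePreserving_inversion hR hd).setIntegral_image_emb
      (measurableEmbedding_inversion_s7 c hR),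
    setIntegral_withDensity_eq_setIntegral_smul (measurable_inversionJacobian c R d) _ hs]

end InnerProductSpace

end EuclideanGeometry

theorem single_layer_inversion_dim3_general
    (r : ℝ) (hr : 0 < r) (Ω : Set (EuclideanSpace ℝ (Fin 3)))
    (h0 : (0 : EuclideanSpace ℝ (Fin 3)) ∉ frontier Ω)
    (T : EuclideanSpace ℝ (Fin 3) → EuclideanSpace ℝ (Fin 3))
    (hT : ∀ x : EuclideanSpace ℝ (Fin 3), x ≠ 0 → T x = (r ^ 2 / ‖x‖ ^ 2) • x)
    (σ σs : Measure (EuclideanSpace ℝ (Fin 3)))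
    (hσ : σ = μH[2].restrict (frontier Ω))
    (hσs : σs = μH[2].restrict (T '' frontier Ω))
    (φ : EuclideanSpace ℝ (Fin 3) → ℝ)
    (φs : EuclideanSpace ℝ (Fin 3) → ℝ)
    (hφs : ∀ y ∈ frontier Ω, φs (T y) = φ y * ‖y‖ ^ 3 / r ^ 3)
    (x : EuclideanSpace ℝ (Fin 3)) (hx : x ≠ 0) :
    ∫ z, (-1 / (4 * π * ‖T x - z‖)) * φs z ∂σs =
      (‖x‖ / r) * ∫ y, (-1 / (4 * π * ‖x - y‖)) * φ y ∂σ := by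
  have hF : MeasurableSet (frontier Ω) := isClosed_frontier.measurableSet
  have hF0 : ∀ y ∈ frontier Ω, y ≠ 0 := fun y hy h => h0 (h ▸ hy)
  have hTinv : ∀ y, y ≠ 0 → T y = inversion 0 r y := fun y hy => by
    rw [hT y hy, inversion_zero_apply]
  rw [hσs, hσ, image_congr fun y hy => hTinv y (hF0 y hy),
    setIntegral_image_inversion hr.ne' zero_le_two _ hF, ← integral_const_mul]
  refine setIntegral_congr_fun hF fun y hy => ?_
  have hy0 := hF0 y hy
  have hJ : (inversionJacobian 0 r 2 y : ℝ) = (r ^ 2 / ‖y‖ ^ 2) ^ 2 := by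
    simp [inversionJacobian, Real.coe_toNNReal _ (by positivity : 0 ≤ r ^ 2 / ‖y‖ ^ 2)]
  have hdist : ‖inversion 0 r x - inversion 0 r y‖ = r ^ 2 / (‖x‖ * ‖y‖) * ‖x - y‖ := by
    simpa [dist_eq_norm] using dist_inversion_inversion hx hy0 r
  rw [← hTinv y hy0, hφs y hy, hTinv x hx, hTinv y hy0, hdist, NNReal.smul_def, smul_eq_mul, hJ]
  rcases eq_or_ne x y with rfl | hxy
  · simp -- both kernels are the junk value `-1 / 0 = 0`
  · field_simp [norm_ne_zero_iff.2 hx, norm_ne_zero_iff.2 hy0,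
      norm_ne_zero_iff.2 (sub_ne_zero.2 hxy)]

/-- Transformation of the single layer potential in `ℝ³` under inversion in a sphere
centered at the origin: with `Γ(z) = −1/(4π|z|)`, `φ*(Ty) = φ(y)|y|³/r³`,
`S_{∂Ω*}[φ*](Tx) = (|x|/r) S_{∂Ω}[φ](x)`. -/
theorem single_layer_inversion_dim3
    (r : ℝ) (hr : 0 < r) (Ω : Set (EuclideanSpace ℝ (Fin 3)))
    (hopen : IsOpen Ω) (hbd : Bornology.IsBounded Ω)
    (h0 : (0 : EuclideanSpace ℝ (Fin 3)) ∉ frontier Ω)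
    (T : EuclideanSpace ℝ (Fin 3) → EuclideanSpace ℝ (Fin 3))
    (hT : ∀ x : EuclideanSpace ℝ (Fin 3), x ≠ 0 → T x = (r ^ 2 / ‖x‖ ^ 2) • x)
    (σ σs : Measure (EuclideanSpace ℝ (Fin 3)))
    (hσ : σ = μH[2].restrict (frontier Ω))
    (hσs : σs = μH[2].restrict (T '' frontier Ω))
    (hfin : σ (frontier Ω) < ⊤)
    (φ : EuclideanSpace ℝ (Fin 3) → ℝ) (hφmeas : Measurable φ)
    (hφbdd : ∃ C, ∀ y, |φ y| ≤ C)
    (φs : EuclideanSpace ℝ (Fin 3) → ℝ)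
    (hφs : ∀ y ∈ frontier Ω, φs (T y) = φ y * ‖y‖ ^ 3 / r ^ 3)
    (x : EuclideanSpace ℝ (Fin 3)) (hx : x ≠ 0)
    (hint : Integrable (fun y => (-1 / (4 * π * ‖x - y‖)) * φ y) σ) :
    ∫ z, (-1 / (4 * π * ‖T x - z‖)) * φs z ∂σs =
      (‖x‖ / r) * ∫ y, (-1 / (4 * π * ‖x - y‖)) * φ y ∂σ :=
  single_layer_inversion_dim3_general r hr Ω h0 T hT σ σs hσ hσs φ φs hφs x hx
end

section
/- (Lemma 3.1(i), d = 3.) Let Ω ⊆ ℝ³ be a bounded open set with 0 ∈ Ω, r > 0, T the inversion in the sphere of radius r centered at the origin, σ the 2-dimensional Hausdorff measure restricted to ∂Ω, and σ* the 2-dimensional Hausdorff measure restricted to ∂Ω* := T(∂Ω). Let ν : ℝ³ → ℝ³ be any map, and define ν*(T x) := −R_x ν(x) on ∂Ω*, where R_x = I − 2(x/|x|)(x/|x|)ᵗ. Let φ : ℝ³ → ℝ be bounded Borel measurable with σ(∂Ω) < ∞ and define φ*(T y) := φ(y)|y|³/r³. Then for every x ∈ ∂Ω (necessarily x ≠ 0)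 such that y ↦ Γ(x−y)φ(y) and y ↦ ⟨ν(x), ∇Γ(x−y)⟩φ(y) are σ-integrable, ∫_{∂Ω*} ⟨ν*(Tx), ∇Γ(Tx − z)⟩ φ*(z) dσ*(z) = −(|x|³/r³) ∫_{∂Ω} ⟨ν(x), ∇Γ(x − y)⟩ φ(y) dσ(y) − (|x| ⟨x, ν(x)⟩ / r³) ∫_{∂Ω} Γ(x − y) φ(y) dσ(y), where Γ(z) = −1/(4π|z|) and ∇Γ(z) = z/(4π|z|³). -/
open MeasureTheory
open scoped Real RealInnerProductSpace ENNReal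

open Filter Set
open scoped NNReal Topology

noncomputable abbrev E3 := EuclideanSpace ℝ (Fin 3)

noncomputable def inv3 (r : ℝ) (y : E3) : E3 := (r ^ 2 / ‖y‖ ^ 2) • y

lemma inv3_meas (r : ℝ) : Measurable (inv3 r) := by
  unfold inv3
  exact (measurable_const.div ((measurable_norm).pow_const 2)).smul measurable_id

lemma inv3_norm (r : ℝ) (hr : 0 < r) {y : E3} (hy : y ≠ 0) :
    ‖inv3 r y‖ = r ^ 2 / ‖y‖ := by
  have h : (0:ℝ) < ‖y‖ := norm_pos_iff.mpr hy
  rw [inv3, norm_smul, Real.norm_eq_abs, abs_of_pos (by positivity)]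
  field_simp

lemma inv3_invol (r : ℝ) (hr : 0 < r) {y : E3} (hy : y ≠ 0) :
    inv3 r (inv3 r y) = y := by
  have h : (0:ℝ) < ‖y‖ := norm_pos_iff.mpr hy
  rw [inv3, inv3_norm r hr hy, inv3, smul_smul]
  rw [show r ^ 2 / (r ^ 2 / ‖y‖) ^ 2 * (r ^ 2 / ‖y‖ ^ 2) = 1 by field_simp]
  simp

lemma inv3_dist (r : ℝ) (hr : 0 < r) {y z : E3} (hy : y ≠ 0) (hz : z ≠ 0) :
    ‖inv3 r y - inv3 r z‖ = r ^ 2 * ‖y - z‖ / (‖y‖ * ‖z‖) := by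
  have hy' : (0:ℝ) < ‖y‖ := norm_pos_iff.mpr hy
  have hz' : (0:ℝ) < ‖z‖ := norm_pos_iff.mpr hz
  have h1 : ‖inv3 r y - inv3 r z‖ ^ 2 = (r ^ 2 * ‖y - z‖ / (‖y‖ * ‖z‖)) ^ 2 := by
    rw [@norm_sub_sq_real, div_pow, mul_pow, norm_sub_sq_real y z]
    unfold inv3
    rw [norm_smul, norm_smul, real_inner_smul_left, real_inner_smul_right,
      Real.norm_eq_abs, Real.norm_eq_abs, abs_of_pos (by positivity), abs_of_pos (by positivity)]
    field_simp
    ring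
  have h2 : (0:ℝ) ≤ r ^ 2 * ‖y - z‖ / (‖y‖ * ‖z‖) := by positivity
  nlinarith [norm_nonneg (inv3 r y - inv3 r z)]

lemma inv3_lipschitzOnWith (r c : ℝ) (hr : 0 < r) (hc : 0 < c) (s : Set E3)
    (hs : ∀ y ∈ s, c ≤ ‖y‖) :
    LipschitzOnWith (r ^ 2 / c ^ 2).toNNReal (inv3 r) s := by
  rw [lipschitzOnWith_iff_dist_le_mul]
  intro y hy z hz
  have hyc := hs y hy; have hzc := hs z hz
  have hy0 : y ≠ 0 := fun h => by simp [h] at hyc; linarith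
  have hz0 : z ≠ 0 := fun h => by simp [h] at hzc; linarith
  have hy' : (0:ℝ) < ‖y‖ := norm_pos_iff.mpr hy0
  have hz' : (0:ℝ) < ‖z‖ := norm_pos_iff.mpr hz0
  rw [dist_eq_norm, dist_eq_norm, inv3_dist r hr hy0 hz0,
    Real.coe_toNNReal _ (by positivity)]
  rw [div_mul_eq_mul_div, div_le_div_iff₀ (by positivity) (by positivity)]
  have h1 : c * c ≤ ‖y‖ * ‖z‖ := mul_le_mul hyc hzc (le_of_lt hc) (norm_nonneg y)
  have h2 : (0:ℝ) ≤ r ^ 2 * ‖y - z‖ := by positivity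
  nlinarith [mul_le_mul_of_nonneg_left h1 h2]

lemma lip_haus (K : ℝ) (hK : 0 ≤ K) {f : E3 → E3} {s : Set E3}
    (h : LipschitzOnWith K.toNNReal f s) :
    μH[2] (f '' s) ≤ ENNReal.ofReal (K ^ 2) * μH[2] s := by
  have := h.hausdorffMeasure_image_le (by norm_num : (0:ℝ) ≤ 2)
  refine this.trans (le_of_eq ?_)
  congr 1
  rw [show ((2:ℝ)) = ((2:ℕ):ℝ) by norm_num, ENNReal.rpow_natCast,
    ENNReal.ofReal, Real.toNNReal_pow hK, ENNReal.coe_pow]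

lemma ennreal_le_of_forall_rho (X Y : ℝ≥0∞)
    (h : ∀ ρ : ℝ, 1 < ρ → X ≤ ENNReal.ofReal (ρ ^ 4) * Y) : X ≤ Y := by
  rcases eq_top_or_lt_top Y with hY | hY
  · simp [hY]
  · have htend : Tendsto (fun ρ : ℝ => ENNReal.ofReal (ρ ^ 4) * Y) (𝓝[>] (1:ℝ)) (𝓝 Y) := by
      have h1 : Tendsto (fun ρ : ℝ => ENNReal.ofReal (ρ ^ 4)) (𝓝[>] (1:ℝ)) (𝓝 1) := by
        have : Tendsto (fun ρ : ℝ => ENNReal.ofReal (ρ ^ 4)) (𝓝 (1:ℝ))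
            (𝓝 (ENNReal.ofReal (1 ^ 4))) :=
          (ENNReal.continuous_ofReal.comp (continuous_pow 4)).tendsto 1
        simpa using this.mono_left nhdsWithin_le_nhds
      have := ENNReal.Tendsto.mul_const h1 (Or.inr hY.ne)
      simpa using this
    exact ge_of_tendsto htend (Filter.eventually_of_mem self_mem_nhdsWithin fun ρ hρ => h ρ hρ)

lemma key_shell (r δ ρ : ℝ) (hr : 0 < r) (hδ : 0 < δ) (hρ : 1 < ρ) (A : Set E3)
    (hA : MeasurableSet A) (hAim : MeasurableSet (inv3 r '' A))
    (hAδ : ∀ y ∈ A, δ ≤ ‖y‖) :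
    μH[2] (inv3 r '' A) ≤ ENNReal.ofReal (ρ ^ 4) * ∫⁻ y in A, ENNReal.ofReal ((r ^ 2 / ‖y‖ ^ 2) ^ 2) ∂μH[2]
    ∧ (∫⁻ y in A, ENNReal.ofReal ((r ^ 2 / ‖y‖ ^ 2) ^ 2) ∂μH[2]) ≤ ENNReal.ofReal (ρ ^ 4) * μH[2] (inv3 r '' A) := by
  have hρ0 : (0:ℝ) < ρ := lt_trans one_pos hρ
  set J : E3 → ℝ≥0∞ := fun y => ENNReal.ofReal ((r ^ 2 / ‖y‖ ^ 2) ^ 2) with hJ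
  set S : ℕ → Set E3 := fun n => {y : E3 | δ * ρ ^ n ≤ ‖y‖ ∧ ‖y‖ < δ * ρ ^ (n + 1)} with hS
  -- basic facts about shells
  have hSmeas : ∀ n, MeasurableSet (S n) := by
    intro n
    have : S n = (fun y : E3 => ‖y‖) ⁻¹' (Set.Ico (δ * ρ ^ n) (δ * ρ ^ (n+1))) := rfl
    rw [this]
    exact measurable_norm measurableSet_Ico
  have hSdis : Pairwise (Function.onFun Disjoint S) := by
    intro n m hnm
    wlog h : n < m generalizing n m
    · exact (this hnm.symm (by omega)).symm
    refine Set.disjoint_left.mpr fun y hy hy' => ?_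
    have h1 : δ * ρ ^ (n+1) ≤ δ * ρ ^ m := by
      have := pow_le_pow_right₀ (le_of_lt hρ) (by omega : n + 1 ≤ m)
      nlinarith
    exact absurd (lt_of_lt_of_le hy.2 (h1.trans hy'.1)) (not_lt.mpr le_rfl)
  have hScover : ∀ y : E3, δ ≤ ‖y‖ → ∃ n, y ∈ S n := by
    intro y hy
    have hex : ∃ n : ℕ, ‖y‖ < δ * ρ ^ (n + 1) := by
      obtain ⟨n, hn⟩ := pow_unbounded_of_one_lt (‖y‖ / δ) hρ
      rw [div_lt_iff₀ hδ] at hn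
      have h2 : ρ ^ n ≤ ρ ^ (n+1) := pow_le_pow_right₀ hρ.le (Nat.le_succ n)
      exact ⟨n, by nlinarith⟩
    classical
    refine ⟨Nat.find hex, ?_, Nat.find_spec hex⟩
    rcases Nat.eq_zero_or_pos (Nat.find hex) with h0 | h0
    · rw [h0]; simpa using hy
    · have h1 := Nat.find_min hex (Nat.pred_lt h0.ne')
      have h2 : (Nat.find hex).pred + 1 = Nat.find hex := Nat.succ_pred_eq_of_pos h0
      rw [h2] at h1
      exact not_lt.mp h1
  -- the pieces
  set An : ℕ → Set E3 := fun n => A ∩ S n with hAn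
  have hA0 : ∀ y ∈ A, y ≠ 0 := by
    intro y hy h0
    have := hAδ y hy
    rw [h0] at this; simp at this; linarith
  have hAcup : A = ⋃ n, An n := by
    apply Set.Subset.antisymm
    · intro y hy
      obtain ⟨n, hn⟩ := hScover y (hAδ y hy)
      exact Set.mem_iUnion.mpr ⟨n, hy, hn⟩
    · exact Set.iUnion_subset fun n => Set.inter_subset_left
  have hAnmeas : ∀ n, MeasurableSet (An n) := fun n => hA.inter (hSmeas n)
  have hAndis : Pairwise (Function.onFun Disjoint An) := fun n m hnm =>
    ((hSdis hnm).mono Set.inter_subset_right Set.inter_subset_right)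
  set I : ℕ → Set E3 := fun n => inv3 r '' (An n) with hI
  have hIeq : ∀ n, I n = (inv3 r '' A) ∩ (inv3 r ⁻¹' (S n)) := by
    intro n
    apply Set.Subset.antisymm
    · rintro z ⟨y, ⟨hyA, hyS⟩, rfl⟩
      exact ⟨⟨y, hyA, rfl⟩, by rw [Set.mem_preimage, inv3_invol r hr (hA0 y hyA)]; exact hyS⟩
    · rintro z ⟨⟨y, hyA, rfl⟩, hz⟩
      rw [Set.mem_preimage, inv3_invol r hr (hA0 y hyA)] at hz
      exact ⟨y, ⟨hyA, hz⟩, rfl⟩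
  have hImeas : ∀ n, MeasurableSet (I n) := by
    intro n
    rw [hIeq n]
    exact hAim.inter (inv3_meas r (hSmeas n))
  have hIdis : Pairwise (Function.onFun Disjoint I) := by
    intro n m hnm
    have := (hSdis hnm).preimage (inv3 r)
    exact Disjoint.mono (by rw [hIeq n]; exact Set.inter_subset_right)
      (by rw [hIeq m]; exact Set.inter_subset_right) this
  have hIcup : inv3 r '' A = ⋃ n, I n := by
    conv_lhs => rw [hAcup]
    exact Set.image_iUnion
  -- measure splits as sums
  have hsum1 : μH[2] (inv3 r '' A) = ∑' n, μH[2] (I n) := by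
    rw [hIcup, measure_iUnion hIdis hImeas]
  have hsum2 : (∫⁻ y in A, J y ∂μH[2]) = ∑' n, ∫⁻ y in An n, J y ∂μH[2] := by
    conv_lhs => rw [hAcup]
    exact lintegral_iUnion hAnmeas hAndis _
  -- per-shell estimates
  have hperF : ∀ n, μH[2] (I n) ≤ ENNReal.ofReal (ρ ^ 4) * ∫⁻ y in An n, J y ∂μH[2] := by
    intro n
    set a := δ * ρ ^ n with hadef
    set b := δ * ρ ^ (n+1) with hbdef
    have ha : 0 < a := by positivity
    have hb : b = ρ * a := by rw [hadef, hbdef, pow_succ]; ring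
    have hab : a < b := by nlinarith
    have hlb : ∀ y ∈ An n, a ≤ ‖y‖ := fun y hy => hy.2.1
    have hlip := inv3_lipschitzOnWith r a hr ha (An n) hlb
    have hcl1 := lip_haus (r ^ 2 / a ^ 2) (by positivity) hlip
    -- ∫ J over An n is at least ofReal ((r^2/b^2)^2) * μ (An n)
    have hcl4 : ENNReal.ofReal ((r ^ 2 / b ^ 2) ^ 2) * μH[2] (An n) ≤ ∫⁻ y in An n, J y ∂μH[2] := by
      rw [← setLIntegral_const (An n) _]
      refine setLIntegral_mono' (hAnmeas n) fun y hy => ?_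
      have h1 : ‖y‖ ≤ b := le_of_lt hy.2.2
      have h2 : (0:ℝ) < ‖y‖ := lt_of_lt_of_le ha (hlb y hy)
      apply ENNReal.ofReal_le_ofReal
      have hle : r ^ 2 / b ^ 2 ≤ r ^ 2 / ‖y‖ ^ 2 :=
        div_le_div_of_nonneg_left (by positivity) (by positivity) (by nlinarith)
      have h4 : (0:ℝ) ≤ r ^ 2 / b ^ 2 := by positivity
      nlinarith
    have hfac : (r ^ 2 / a ^ 2) ^ 2 = ρ ^ 4 * (r ^ 2 / b ^ 2) ^ 2 := by
      rw [hb]; field_simp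
    calc μH[2] (I n) ≤ ENNReal.ofReal ((r ^ 2 / a ^ 2) ^ 2) * μH[2] (An n) := hcl1
      _ = ENNReal.ofReal (ρ ^ 4) * (ENNReal.ofReal ((r ^ 2 / b ^ 2) ^ 2) * μH[2] (An n)) := by
          rw [hfac, ENNReal.ofReal_mul (by positivity), mul_assoc]
      _ ≤ ENNReal.ofReal (ρ ^ 4) * ∫⁻ y in An n, J y ∂μH[2] := by
          exact mul_le_mul_right hcl4 _
  have hperB : ∀ n, (∫⁻ y in An n, J y ∂μH[2]) ≤ ENNReal.ofReal (ρ ^ 4) * μH[2] (I n) := by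
    intro n
    set a := δ * ρ ^ n with hadef
    set b := δ * ρ ^ (n+1) with hbdef
    have ha : 0 < a := by positivity
    have hb : b = ρ * a := by rw [hadef, hbdef, pow_succ]; ring
    have hab : a < b := by nlinarith
    have hlb : ∀ y ∈ An n, a ≤ ‖y‖ := fun y hy => hy.2.1
    have hA0n : ∀ y ∈ An n, y ≠ 0 := fun y hy => hA0 y hy.1
    -- claim3 : ∫ J ≤ ofReal((r^2/a^2)^2) * μ (An n)
    have hcl3 : (∫⁻ y in An n, J y ∂μH[2]) ≤ ENNReal.ofReal ((r ^ 2 / a ^ 2) ^ 2) * μH[2] (An n) := by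
      rw [← setLIntegral_const (An n) _]
      refine setLIntegral_mono' (hAnmeas n) fun y hy => ?_
      have h1 : a ≤ ‖y‖ := hlb y hy
      apply ENNReal.ofReal_le_ofReal
      have hle : r ^ 2 / ‖y‖ ^ 2 ≤ r ^ 2 / a ^ 2 :=
        div_le_div_of_nonneg_left (by positivity) (by positivity) (by nlinarith)
      have h4 : (0:ℝ) ≤ r ^ 2 / ‖y‖ ^ 2 := by positivity
      nlinarith
    -- claim2 : μ (An n) ≤ ofReal((b^2/r^2)^2) * μ (I n)
    have hAn_img : An n = inv3 r '' (I n) := by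
      rw [hI, ← Set.image_comp]
      symm
      rw [Set.image_congr (fun y hy => by
        show (inv3 r ∘ inv3 r) y = id y
        simp [Function.comp, inv3_invol r hr (hA0n y hy)])]
      simp
    have hIlb : ∀ z ∈ I n, r ^ 2 / b ≤ ‖z‖ := by
      rintro z ⟨y, hy, rfl⟩
      rw [inv3_norm r hr (hA0n y hy)]
      have h2 : (0:ℝ) < ‖y‖ := lt_of_lt_of_le ha (hlb y hy)
      exact div_le_div_of_nonneg_left (by positivity) h2 (le_of_lt hy.2.2)
    have hlip2 := inv3_lipschitzOnWith r (r ^ 2 / b) hr (by positivity) (I n) hIlb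
    have hcl2' := lip_haus (r ^ 2 / (r ^ 2 / b) ^ 2) (by positivity) hlip2
    rw [← hAn_img] at hcl2'
    have hconst : (r ^ 2 / (r ^ 2 / b) ^ 2) ^ 2 = (b ^ 2 / r ^ 2) ^ 2 := by
      field_simp
    rw [hconst] at hcl2'
    have hfac2 : (r ^ 2 / a ^ 2) ^ 2 * (b ^ 2 / r ^ 2) ^ 2 = ρ ^ 4 := by
      rw [hb]; field_simp
    calc (∫⁻ y in An n, J y ∂μH[2]) ≤ ENNReal.ofReal ((r ^ 2 / a ^ 2) ^ 2) * μH[2] (An n) := hcl3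
      _ ≤ ENNReal.ofReal ((r ^ 2 / a ^ 2) ^ 2) * (ENNReal.ofReal ((b ^ 2 / r ^ 2) ^ 2) * μH[2] (I n)) :=
          mul_le_mul_right hcl2' _
      _ = ENNReal.ofReal (ρ ^ 4) * μH[2] (I n) := by
          rw [← mul_assoc, ← ENNReal.ofReal_mul (by positivity), hfac2]
  constructor
  · rw [hsum1, hsum2, ← ENNReal.tsum_mul_left]
    exact ENNReal.tsum_le_tsum hperF
  · rw [hsum1, hsum2, ← ENNReal.tsum_mul_left]
    exact ENNReal.tsum_le_tsum hperB

lemma key_measure (r δ : ℝ) (hr : 0 < r) (hδ : 0 < δ) (A : Set E3)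
    (hA : MeasurableSet A) (hAim : MeasurableSet (inv3 r '' A))
    (hAδ : ∀ y ∈ A, δ ≤ ‖y‖) :
    μH[2] (inv3 r '' A) = ∫⁻ y in A, ENNReal.ofReal ((r ^ 2 / ‖y‖ ^ 2) ^ 2) ∂μH[2] := by
  apply le_antisymm
  · exact ennreal_le_of_forall_rho _ _ fun ρ hρ =>
      (key_shell r δ ρ hr hδ hρ A hA hAim hAδ).1
  · exact ennreal_le_of_forall_rho _ _ fun ρ hρ =>
      (key_shell r δ ρ hr hδ hρ A hA hAim hAδ).2

lemma kernel_id (r : ℝ) (hr : 0 < r) (x y w : E3) (hx : x ≠ 0) (hy : y ≠ 0) (c : ℝ) :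
    (r ^ 2 / ‖y‖ ^ 2) ^ 2 *
      (⟪-(w - (2 * ⟪x, w⟫ / ‖x‖ ^ 2) • x),
          (4 * π * ‖inv3 r x - inv3 r y‖ ^ 3)⁻¹ • (inv3 r x - inv3 r y)⟫ *
        (c * ‖y‖ ^ 3 / r ^ 3)) =
    -(‖x‖ ^ 3 / r ^ 3) * (⟪w, (4 * π * ‖x - y‖ ^ 3)⁻¹ • (x - y)⟫ * c)
      - (‖x‖ * ⟪x, w⟫ / r ^ 3) * (-1 / (4 * π * ‖x - y‖) * c) := by
  by_cases hxy : x = y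
  · subst hxy
    simp
  · have hs : (0:ℝ) < ‖x‖ := norm_pos_iff.mpr hx
    have ht : (0:ℝ) < ‖y‖ := norm_pos_iff.mpr hy
    have hq : (0:ℝ) < ‖x - y‖ := norm_pos_iff.mpr (sub_ne_zero.mpr hxy)
    have hπ : (0:ℝ) < π := Real.pi_pos
    have hTd : ‖inv3 r x - inv3 r y‖ = r ^ 2 * ‖x - y‖ / (‖x‖ * ‖y‖) :=
      inv3_dist r hr hx hy
    have hq2 : ‖x - y‖ ^ 2 = ‖x‖ ^ 2 - 2 * ⟪x, y⟫ + ‖y‖ ^ 2 := by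
      rw [@norm_sub_sq_real]
    have hq2pos : (0:ℝ) < ‖x‖ ^ 2 - 2 * ⟪x, y⟫ + ‖y‖ ^ 2 := by
      rw [← hq2]; positivity
    have hTsub : inv3 r x - inv3 r y = (r ^ 2 / ‖x‖ ^ 2) • x - (r ^ 2 / ‖y‖ ^ 2) • y := rfl
    have h3 : ‖x - y‖ ^ 3 = ‖x - y‖ * (‖x‖ ^ 2 - 2 * ⟪x, y⟫ + ‖y‖ ^ 2) := by
      rw [← hq2]; ring
    rw [hTd, hTsub]
    simp only [inner_sub_right, inner_smul_right, inner_neg_left, inner_sub_left,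
      real_inner_smul_left, real_inner_self_eq_norm_sq]
    have hT3 : (r ^ 2 * ‖x - y‖ / (‖x‖ * ‖y‖)) ^ 3 =
        (r ^ 2) ^ 3 * (‖x - y‖ * (‖x‖ ^ 2 - 2 * ⟪x, y⟫ + ‖y‖ ^ 2)) / (‖x‖ * ‖y‖) ^ 3 := by
      rw [div_pow, show (r ^ 2 * ‖x - y‖) ^ 3 = (r ^ 2) ^ 3 * (‖x - y‖ * ‖x - y‖ ^ 2) by ring, hq2]
    rw [hT3, h3, real_inner_comm x w]
    have hsne : ‖x‖ ≠ 0 := hs.ne'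
    have htne : ‖y‖ ≠ 0 := ht.ne'
    have hqne : ‖x - y‖ ≠ 0 := hq.ne'
    have hπne : π ≠ 0 := hπ.ne'
    have hrne : r ≠ 0 := hr.ne'
    have hQne : ‖x‖ ^ 2 - 2 * ⟪x, y⟫ + ‖y‖ ^ 2 ≠ 0 := hq2pos.ne'
    set p := ⟪x, y⟫ with hp
    set u := ⟪w, x⟫ with hu
    set v := ⟪w, y⟫ with hv
    field_simp
    ring


/-- Lemma 3.1(i), `d = 3`: transformation of the Neumann–Poincaré operator under
inversion in a sphere centered at an interior point `0 ∈ Ω`: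
`K*_{∂Ω*}[φ*](Tx) = −(|x|³/r³) K*_{∂Ω}[φ](x) − (|x|(x·ν_x)/r³) S_{∂Ω}[φ](x)`,
with `Γ(z) = −1/(4π|z|)`, `∇Γ(z) = z/(4π|z|³)`, `φ*(Ty) = φ(y)|y|³/r³`,
and `ν*(Tx) = −R_x ν(x)`. -/
theorem np_inversion_interior_dim3
    (r : ℝ) (hr : 0 < r) (Ω : Set (EuclideanSpace ℝ (Fin 3)))
    (hopen : IsOpen Ω) (hbd : Bornology.IsBounded Ω) (h0 : (0 : EuclideanSpace ℝ (Fin 3)) ∈ Ω)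
    (T : EuclideanSpace ℝ (Fin 3) → EuclideanSpace ℝ (Fin 3))
    (hT : ∀ x : EuclideanSpace ℝ (Fin 3), x ≠ 0 → T x = (r ^ 2 / ‖x‖ ^ 2) • x)
    (σ σs : Measure (EuclideanSpace ℝ (Fin 3)))
    (hσ : σ = μH[2].restrict (frontier Ω))
    (hσs : σs = μH[2].restrict (T '' frontier Ω))
    (hfin : σ (frontier Ω) < ⊤)
    (R : EuclideanSpace ℝ (Fin 3) → EuclideanSpace ℝ (Fin 3) → EuclideanSpace ℝ (Fin 3))
    (hR : ∀ x v : EuclideanSpace ℝ (Fin 3), x ≠ 0 →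
      R x v = v - (2 * ⟪x, v⟫ / ‖x‖ ^ 2) • x)
    (ν νs : EuclideanSpace ℝ (Fin 3) → EuclideanSpace ℝ (Fin 3))
    (hνs : ∀ x ∈ frontier Ω, νs (T x) = -(R x (ν x)))
    (φ : EuclideanSpace ℝ (Fin 3) → ℝ) (hφmeas : Measurable φ)
    (hφbdd : ∃ C, ∀ y, |φ y| ≤ C)
    (φs : EuclideanSpace ℝ (Fin 3) → ℝ)
    (hφs : ∀ y ∈ frontier Ω, φs (T y) = φ y * ‖y‖ ^ 3 / r ^ 3)
    (x : EuclideanSpace ℝ (Fin 3)) (hxΩ : x ∈ frontier Ω)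
    (hint1 : Integrable (fun y => (-1 / (4 * π * ‖x - y‖)) * φ y) σ)
    (hint2 : Integrable
      (fun y => ⟪ν x, (4 * π * ‖x - y‖ ^ 3)⁻¹ • (x - y)⟫ * φ y) σ) :
    ∫ z, ⟪νs (T x), (4 * π * ‖T x - z‖ ^ 3)⁻¹ • (T x - z)⟫ * φs z ∂σs =
      -(‖x‖ ^ 3 / r ^ 3) *
          ∫ y, ⟪ν x, (4 * π * ‖x - y‖ ^ 3)⁻¹ • (x - y)⟫ * φ y ∂σ
        - (‖x‖ * ⟪x, ν x⟫ / r ^ 3) *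
          ∫ y, (-1 / (4 * π * ‖x - y‖)) * φ y ∂σ := by
  set F := frontier Ω with hF
  -- 0 is not on the frontier
  have h0F : (0 : E3) ∉ F := by
    rw [hF, hopen.frontier_eq]
    exact fun h => h.2 h0
  have hF0 : ∀ y ∈ F, y ≠ 0 := fun y hy h => h0F (h ▸ hy)
  -- frontier is bounded away from 0
  obtain ⟨δ, hδpos, hball⟩ := Metric.isOpen_iff.mp isClosed_frontier.isOpen_compl 0 h0F
  have hδF : ∀ y ∈ F, δ ≤ ‖y‖ := by
    intro y hy
    by_contra h
    exact (hball (by simpa [Metric.mem_ball, dist_zero_right] using not_le.mp h)) hy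
  -- T agrees with inv3 on F
  have hTF : ∀ y ∈ F, T y = inv3 r y := fun y hy => hT y (hF0 y hy)
  have himg : T '' F = inv3 r '' F := Set.image_congr hTF
  have hFmeas : MeasurableSet F := isClosed_frontier.measurableSet
  have hFcpt : IsCompact F :=
    Metric.isCompact_of_isClosed_isBounded isClosed_frontier
      ((hbd.closure).subset frontier_subset_closure)
  have hcont : ContinuousOn (inv3 r) F := by
    refine ContinuousOn.smul (f := fun y => r ^ 2 / ‖y‖ ^ 2) (g := fun y => y) ?_ continuousOn_id
    exact continuousOn_const.div ((continuous_norm.pow 2).continuousOn)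
      (fun y hy => pow_ne_zero 2 (norm_ne_zero_iff.mpr (hF0 y hy)))
  have himgcpt : IsCompact (inv3 r '' F) := hFcpt.image_of_continuousOn hcont
  have himgmeas : MeasurableSet (inv3 r '' F) := himgcpt.isClosed.measurableSet
  set J' : E3 → ℝ≥0 := fun y => Real.toNNReal ((r ^ 2 / ‖y‖ ^ 2) ^ 2) with hJ'
  have hJ'meas : Measurable J' :=
    (measurable_const.div ((measurable_norm).pow_const 2)).pow_const 2 |>.real_toNNReal
  -- the change-of-variables identity of measures
  have hmeq : σs = Measure.map (inv3 r)
      ((μH[2].restrict F).withDensity (fun y => (J' y : ℝ≥0∞))) := by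
    rw [hσs]
    ext B hB
    have hpre : MeasurableSet (inv3 r ⁻¹' B) := inv3_meas r hB
    rw [Measure.map_apply (inv3_meas r) hB, withDensity_apply _ hpre,
      Measure.restrict_restrict hpre]
    have hset : inv3 r '' (inv3 r ⁻¹' B ∩ F) = B ∩ inv3 r '' F := by
      apply Set.Subset.antisymm
      · rintro z ⟨y, ⟨hyB, hyF⟩, rfl⟩
        exact ⟨hyB, ⟨y, hyF, rfl⟩⟩
      · rintro z ⟨hzB, y, hyF, rfl⟩
        exact ⟨y, ⟨hzB, hyF⟩, rfl⟩
    have hkey := key_measure r δ hr hδpos (inv3 r ⁻¹' B ∩ F) (hpre.inter hFmeas)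
      (by rw [hset]; exact hB.inter himgmeas) (fun y hy => hδF y hy.2)
    rw [Measure.restrict_apply hB, himg, ← hset, hkey]
    rfl
  -- the integrand and its measurable version
  set f : E3 → ℝ := fun z =>
    ⟪νs (T x), (4 * π * ‖T x - z‖ ^ 3)⁻¹ • (T x - z)⟫ * φs z with hf
  set g : E3 → ℝ := fun z =>
    ⟪νs (T x), (4 * π * ‖T x - z‖ ^ 3)⁻¹ • (T x - z)⟫ *
      (φ (inv3 r z) * ‖inv3 r z‖ ^ 3 / r ^ 3) with hg
  have hgmeas : Measurable g := by
    apply Measurable.mul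
    · apply Measurable.inner measurable_const
      exact ((measurable_const.mul ((measurable_const.sub measurable_id).norm.pow_const 3)).inv).smul
        (measurable_const.sub measurable_id)
    · exact ((hφmeas.comp (inv3_meas r)).mul (((inv3_meas r).norm).pow_const 3)).div measurable_const
  have hfg : ∀ z ∈ T '' F, f z = g z := by
    rintro z ⟨y, hyF, rfl⟩
    have hy0 := hF0 y hyF
    have h1 : inv3 r (T y) = y := by rw [hTF y hyF]; exact inv3_invol r hr hy0
    simp only [hf, hg, h1, hφs y hyF]
  have himgmeas' : MeasurableSet (T '' F) := by rw [himg]; exact himgmeas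
  have hae : f =ᵐ[σs] g := by
    rw [hσs]
    filter_upwards [self_mem_ae_restrict himgmeas'] with z hz
    exact hfg z hz
  have hfaesm : AEStronglyMeasurable f σs :=
    hgmeas.aestronglyMeasurable.congr hae.symm
  -- change variables in the integral
  have hstep1 : ∫ z, f z ∂σs =
      ∫ y, J' y • f (inv3 r y) ∂(μH[2].restrict F) := by
    rw [hmeq] at hfaesm ⊢
    rw [integral_map (inv3_meas r).aemeasurable hfaesm,
      integral_withDensity_eq_integral_smul hJ'meas]
  -- pointwise identity on F
  have hptw : ∀ y ∈ F, J' y • f (inv3 r y) =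
      -(‖x‖ ^ 3 / r ^ 3) * (⟪ν x, (4 * π * ‖x - y‖ ^ 3)⁻¹ • (x - y)⟫ * φ y)
        - (‖x‖ * ⟪x, ν x⟫ / r ^ 3) * (-1 / (4 * π * ‖x - y‖) * φ y) := by
    intro y hyF
    have hy0 := hF0 y hyF
    have hx0 := hF0 x hxΩ
    have hJval : (J' y : ℝ) = (r ^ 2 / ‖y‖ ^ 2) ^ 2 :=
      Real.coe_toNNReal _ (by positivity)
    have hTx : T x = inv3 r x := hTF x hxΩ
    have hTy : inv3 r y = T y := (hTF y hyF).symm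
    have hνval : νs (T x) = -(ν x - (2 * ⟪x, ν x⟫ / ‖x‖ ^ 2) • x) := by
      rw [hνs x hxΩ, hR x (ν x) hx0]
    have hφsval : φs (inv3 r y) = φ y * ‖y‖ ^ 3 / r ^ 3 := by
      rw [hTy]; exact hφs y hyF
    rw [NNReal.smul_def, hJval]
    simp only [hf, smul_eq_mul, hφsval]
    rw [hνval, hTx]
    exact kernel_id r hr x y (ν x) hx0 hy0 (φ y)
  have hstep2 : ∫ y, J' y • f (inv3 r y) ∂(μH[2].restrict F) =
      ∫ y, (-(‖x‖ ^ 3 / r ^ 3) * (⟪ν x, (4 * π * ‖x - y‖ ^ 3)⁻¹ • (x - y)⟫ * φ y)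
        - (‖x‖ * ⟪x, ν x⟫ / r ^ 3) * (-1 / (4 * π * ‖x - y‖) * φ y)) ∂(μH[2].restrict F) := by
    apply integral_congr_ae
    filter_upwards [self_mem_ae_restrict hFmeas] with y hy
    exact hptw y hy
  have hσF : μH[2].restrict F = σ := hσ.symm
  rw [show (∫ z, ⟪νs (T x), (4 * π * ‖T x - z‖ ^ 3)⁻¹ • (T x - z)⟫ * φs z ∂σs) = ∫ z, f z ∂σs from rfl,
    hstep1, hstep2, hσF,
    integral_sub ((hint2.const_mul _)) ((hint1.const_mul _)),
    integral_const_mul, integral_const_mul]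
end
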